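/- Let ψ : T → S be a surjective idempotent separating homomorphism of inverse semigroups with kernel K = ⊔_{e ∈ E(T)} K_e (a union of groups indexed by the idempotents of T). Then for k ∈ K_e and s ∈ S, the element t⁻¹kt is independent of the choice of t ∈ T with ψ(t) = s, up to conjugacy; precisely, if ψ(t₁) = ψ(t₂) = s then the images of t₁⁻¹kt₁ and t₂⁻¹kt₂ in the abelianization K_{t₁⁻¹et₁}^{ab} coincide (note t₁⁻¹et₁ = t₂⁻¹et₂). -/

import Mathlib

class InverseSemigroup (S : Type*) extends Semigroup S, Inv S where
  mul_inv_mul : ∀ a : S, a * a⁻¹ * a = a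
  inv_mul_inv : ∀ a : S, a⁻¹ * a * a⁻¹ = a⁻¹
  idem_comm : ∀ e f : S, e * e = e → f * f = f → e * f = f * e

/-- The component `K_f` of the kernel of `ψ` at the idempotent `f`:
elements mapping to an idempotent, with `a * a⁻¹ = f`. -/
def kerComp {T S : Type*} [InverseSemigroup T] [InverseSemigroup S]
    (ψ : T → S) (f : T) : Set T :=
  {a : T | ψ a * ψ a = ψ a ∧ a * a⁻¹ = f}

/-- The sub-semigroup of products of commutators of elements of `K_f`; two elements of
`K_f` have the same image in the abelianization `K_f^{ab}` iff the product of one with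
the inverse of the other lies in this set. -/
def commClosure {T S : Type*} [InverseSemigroup T] [InverseSemigroup S]
    (ψ : T → S) (f : T) : Subsemigroup T :=
  Subsemigroup.closure
    {x : T | ∃ a ∈ kerComp ψ f, ∃ b ∈ kerComp ψ f, x = a * b * a⁻¹ * b⁻¹}

/-!
If `ψ x` is idempotent, then `x` commutes with every idempotent `g` of `T`: `x * g * x⁻¹` and
`g * (x * x⁻¹)` are idempotents with the same image. Hence conjugation `x ↦ t⁻¹ * x * t` is
multiplicative on such elements. If `ψ t₁ = ψ t₂`, then `m = t₁ * t₂⁻¹` is one of them and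
`t₂ = m⁻¹ * t₁`, so `(t₁⁻¹ * k * t₁) * (t₂⁻¹ * k⁻¹ * t₂)` is the conjugate by `t₁` of the
commutator of `k` and `m`. With `e = k * k⁻¹` this is also the commutator of `k` and `e * m`,
and the conjugates of `k` and `e * m` by `t₁` lie in `K_{t₁⁻¹ * e * t₁}`.
-/

def IdempotentSeparating {T S : Type*} [Mul T] [Mul S] (ψ : T → S) : Prop :=
  ∀ e f : T, IsIdempotentElem e → IsIdempotentElem f → ψ e = ψ f → e = f

namespace InverseSemigroup

variable {T : Type*} [InverseSemigroup T]

theorem isIdempotentElem_mul_inv (a : T) : IsIdempotentElem (a * a⁻¹) := by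
  rw [IsIdempotentElem, ← mul_assoc, mul_inv_mul]

theorem isIdempotentElem_inv_mul (a : T) : IsIdempotentElem (a⁻¹ * a) := by
  rw [IsIdempotentElem, ← mul_assoc, inv_mul_inv]

theorem commute_of_isIdempotentElem {e f : T} (he : IsIdempotentElem e)
    (hf : IsIdempotentElem f) : Commute e f :=
  idem_comm e f he hf

theorem eq_inv_of_mul_mul_eq {a x : T} (h₁ : a * x * a = a) (h₂ : x * a * x = x) :
    x = a⁻¹ := by
  have hxa : IsIdempotentElem (x * a) := by rw [IsIdempotentElem, ← mul_assoc, h₂]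
  have hax : IsIdempotentElem (a * x) := by rw [IsIdempotentElem, ← mul_assoc, h₁]
  have hia := isIdempotentElem_inv_mul a
  have hai := isIdempotentElem_mul_inv a
  calc x = x * (a * a⁻¹ * a) * x := by rw [mul_inv_mul, h₂]
    _ = x * a * (a⁻¹ * a) * x := by simp only [mul_assoc]
    _ = a⁻¹ * a * (x * a) * x := by rw [(commute_of_isIdempotentElem hxa hia).eq]
    _ = a⁻¹ * a * (x * a * x) := by simp only [mul_assoc]
    _ = a⁻¹ * (a * a⁻¹ * a) * x := by rw [h₂, mul_inv_mul]
    _ = a⁻¹ * ((a * a⁻¹) * (a * x)) := by simp only [mul_assoc]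
    _ = a⁻¹ * ((a * x) * (a * a⁻¹)) := by rw [(commute_of_isIdempotentElem hai hax).eq]
    _ = a⁻¹ * (a * x * a) * a⁻¹ := by simp only [mul_assoc]
    _ = a⁻¹ := by rw [h₁, inv_mul_inv]

theorem inv_inv (a : T) : a⁻¹⁻¹ = a :=
  (eq_inv_of_mul_mul_eq (inv_mul_inv a) (mul_inv_mul a)).symm

theorem mul_inv_rev (a b : T) : (a * b)⁻¹ = b⁻¹ * a⁻¹ := by
  have hb := isIdempotentElem_mul_inv b
  have ha := isIdempotentElem_inv_mul a
  refine (eq_inv_of_mul_mul_eq ?_ ?_).symm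
  · calc a * b * (b⁻¹ * a⁻¹) * (a * b) = a * ((b * b⁻¹) * (a⁻¹ * a)) * b := by
          simp only [mul_assoc]
      _ = a * a⁻¹ * a * (b * b⁻¹ * b) := by
          rw [(commute_of_isIdempotentElem hb ha).eq]; simp only [mul_assoc]
      _ = a * b := by rw [mul_inv_mul, mul_inv_mul]
  · calc b⁻¹ * a⁻¹ * (a * b) * (b⁻¹ * a⁻¹) = b⁻¹ * ((a⁻¹ * a) * (b * b⁻¹)) * a⁻¹ := by
          simp only [mul_assoc]
      _ = b⁻¹ * b * b⁻¹ * (a⁻¹ * a * a⁻¹) := by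
          rw [(commute_of_isIdempotentElem ha hb).eq]; simp only [mul_assoc]
      _ = b⁻¹ * a⁻¹ := by rw [inv_mul_inv, inv_mul_inv]

theorem inv_eq_self_of_isIdempotentElem {e : T} (he : IsIdempotentElem e) : e⁻¹ = e :=
  have hee : e * e * e = e := by rw [he.eq, he.eq]
  (eq_inv_of_mul_mul_eq hee hee).symm

theorem commute_inv_left {x g : T} (h : Commute x g)
    (hg : IsIdempotentElem g) : Commute x⁻¹ g :=
  calc x⁻¹ * g = (g * x)⁻¹ := by rw [mul_inv_rev, inv_eq_self_of_isIdempotentElem hg]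
    _ = (x * g)⁻¹ := by rw [h.eq]
    _ = g * x⁻¹ := by rw [mul_inv_rev, inv_eq_self_of_isIdempotentElem hg]

theorem mul_mul_inv_of_isIdempotentElem {e : T} (he : IsIdempotentElem e) (m : T) :
    e * m * (e * m)⁻¹ = e * (m * m⁻¹) := by
  rw [mul_inv_rev, inv_eq_self_of_isIdempotentElem he]
  calc e * m * (m⁻¹ * e) = e * (m * m⁻¹) * e := by simp only [mul_assoc]
    _ = e * (m * m⁻¹) := by
      rw [mul_assoc, ← (commute_of_isIdempotentElem he (isIdempotentElem_mul_inv m)).eq,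
        ← mul_assoc, he.eq]

theorem isIdempotentElem_conj (t : T) {e : T} (he : IsIdempotentElem e) :
    IsIdempotentElem (t⁻¹ * e * t) :=
  calc t⁻¹ * e * t * (t⁻¹ * e * t) = t⁻¹ * (e * (t * t⁻¹)) * e * t := by simp only [mul_assoc]
    _ = t⁻¹ * t * t⁻¹ * (e * e) * t := by
      rw [(commute_of_isIdempotentElem he (isIdempotentElem_mul_inv t)).eq]
      simp only [mul_assoc]
    _ = t⁻¹ * e * t := by rw [inv_mul_inv, he.eq]

theorem conj_inv (x t : T) : (t⁻¹ * x * t)⁻¹ = t⁻¹ * x⁻¹ * t := by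
  rw [mul_inv_rev, mul_inv_rev, inv_inv, mul_assoc]

theorem conj_mul_inv_mul (e t : T) : t⁻¹ * (e * (t * t⁻¹)) * t = t⁻¹ * e * t := by
  rw [mul_assoc t⁻¹, mul_assoc e, mul_inv_mul, ← mul_assoc]

theorem conj_mul_conj {x t : T} (hx : Commute x (t * t⁻¹)) (y : T) :
    t⁻¹ * x * t * (t⁻¹ * y * t) = t⁻¹ * (x * y) * t :=
  calc t⁻¹ * x * t * (t⁻¹ * y * t) = t⁻¹ * (x * (t * t⁻¹)) * y * t := by simp only [mul_assoc]
    _ = t⁻¹ * t * t⁻¹ * (x * y) * t := by rw [hx.eq]; simp only [mul_assoc]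
    _ = t⁻¹ * (x * y) * t := by rw [inv_mul_inv]

theorem conj_commutator {x y t : T} (hx : Commute x (t * t⁻¹)) (hy : Commute y (t * t⁻¹)) :
    t⁻¹ * x * t * (t⁻¹ * y * t) * (t⁻¹ * x * t)⁻¹ * (t⁻¹ * y * t)⁻¹ =
      t⁻¹ * (x * y * x⁻¹ * y⁻¹) * t := by
  have hxy := hx.mul_left hy
  have hx' := commute_inv_left hx (isIdempotentElem_mul_inv t)
  rw [conj_inv, conj_inv, conj_mul_conj hx, conj_mul_conj hxy, conj_mul_conj (hxy.mul_left hx')]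

theorem commutator_mul_inv_self_mul {k m : T} (hk : Commute k (k * k⁻¹))
    (hm : Commute m (k * k⁻¹)) :
    k * (k * k⁻¹ * m) * k⁻¹ * (k * k⁻¹ * m)⁻¹ = k * m * k⁻¹ * m⁻¹ := by
  have he := isIdempotentElem_mul_inv k
  have hke : k * (k * k⁻¹) = k := by rw [hk.eq, mul_inv_mul]
  have hk'e : k⁻¹ * (k * k⁻¹) = k⁻¹ := by rw [← mul_assoc, inv_mul_inv]
  calc k * (k * k⁻¹ * m) * k⁻¹ * (k * k⁻¹ * m)⁻¹
        = k * (k * k⁻¹) * m * k⁻¹ * (k * k⁻¹ * m⁻¹) := by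
        rw [mul_inv_rev, inv_eq_self_of_isIdempotentElem he, (commute_inv_left hm he).eq]
        simp only [mul_assoc]
    _ = k * m * (k⁻¹ * (k * k⁻¹)) * m⁻¹ := by rw [hke]; simp only [mul_assoc]
    _ = k * m * k⁻¹ * m⁻¹ := by rw [hk'e]

section Hom

variable {S : Type*} [InverseSemigroup S] {ψ : T →ₙ* S}

variable (ψ) in
theorem map_inv (a : T) : ψ a⁻¹ = (ψ a)⁻¹ :=
  eq_inv_of_mul_mul_eq (by rw [← map_mul, ← map_mul, mul_inv_mul])
    (by rw [← map_mul, ← map_mul, inv_mul_inv])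

theorem inv_mul_eq_of_map_eq (hψ : IdempotentSeparating ψ) {t₁ t₂ : T} (h : ψ t₁ = ψ t₂) :
    t₁⁻¹ * t₁ = t₂⁻¹ * t₂ :=
  hψ _ _ (isIdempotentElem_inv_mul t₁) (isIdempotentElem_inv_mul t₂)
    (by rw [map_mul, map_mul, map_inv, map_inv, h])

theorem conj_eq_of_map_eq (hψ : IdempotentSeparating ψ) {t₁ t₂ e : T} (h : ψ t₁ = ψ t₂)
    (he : IsIdempotentElem e) : t₁⁻¹ * e * t₁ = t₂⁻¹ * e * t₂ :=
  hψ _ _ (isIdempotentElem_conj t₁ he) (isIdempotentElem_conj t₂ he)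
    (by simp only [map_mul, map_inv, h])

theorem isIdempotentElem_map_mul_inv_of_map_eq {t₁ t₂ : T} (h : ψ t₁ = ψ t₂) :
    IsIdempotentElem (ψ (t₁ * t₂⁻¹)) := by
  rw [map_mul, map_inv, h]
  exact isIdempotentElem_mul_inv _

theorem mul_inv_mul_mul_inv_inv_of_map_eq (hψ : IdempotentSeparating ψ) {t₁ t₂ : T}
    (h : ψ t₁ = ψ t₂) : t₁ * t₂⁻¹ * (t₁ * t₂⁻¹)⁻¹ = t₁ * t₁⁻¹ := by
  rw [mul_inv_rev, inv_inv, mul_assoc, ← mul_assoc t₂⁻¹, ← inv_mul_eq_of_map_eq hψ h,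
    inv_mul_inv]

theorem mul_inv_inv_mul_of_map_eq (hψ : IdempotentSeparating ψ) {t₁ t₂ : T}
    (h : ψ t₁ = ψ t₂) : (t₁ * t₂⁻¹)⁻¹ * t₁ = t₂ := by
  rw [mul_inv_rev, inv_inv, mul_assoc, inv_mul_eq_of_map_eq hψ h, ← mul_assoc, mul_inv_mul]

theorem commute_of_isIdempotentElem_map (hψ : IdempotentSeparating ψ) {k g : T}
    (hk : IsIdempotentElem (ψ k)) (hg : IsIdempotentElem g) : Commute k g := by
  have he := isIdempotentElem_mul_inv k
  have hconj : k * g * k⁻¹ = g * (k * k⁻¹) := by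
    refine hψ _ _ ?_ (hg.mul_of_commute (commute_of_isIdempotentElem hg he) he) ?_
    · simpa only [inv_inv] using isIdempotentElem_conj k⁻¹ hg
    · simp only [map_mul, map_inv, inv_eq_self_of_isIdempotentElem hk]
      rw [(commute_of_isIdempotentElem hk (hg.map ψ)).eq, mul_assoc]
  calc k * g = k * (k⁻¹ * k * g) := by rw [← mul_assoc, ← mul_assoc, mul_inv_mul]
    _ = k * g * k⁻¹ * k := by
      rw [(commute_of_isIdempotentElem (isIdempotentElem_inv_mul k) hg).eq]
      simp only [mul_assoc]
    _ = g * k := by rw [hconj, mul_assoc, mul_inv_mul]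

theorem conj_mem_kerComp (hψ : IdempotentSeparating ψ) {x : T} (hx : IsIdempotentElem (ψ x))
    (t : T) : t⁻¹ * x * t ∈ kerComp ψ (t⁻¹ * (x * x⁻¹) * t) := by
  refine ⟨?_, ?_⟩
  · simp only [map_mul, map_inv]
    exact isIdempotentElem_conj _ hx
  · rw [conj_inv,
      conj_mul_conj (commute_of_isIdempotentElem_map hψ hx (isIdempotentElem_mul_inv t))]

end Hom

end InverseSemigroup

open InverseSemigroup

theorem stmt4_general {T S : Type*} [InverseSemigroup T] [InverseSemigroup S] (ψ : T → S)
    (hmul : ∀ a b : T, ψ (a * b) = ψ a * ψ b)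
    (hsep : ∀ e f : T, e * e = e → f * f = f → ψ e = ψ f → e = f)
    (e : T) (k : T) (hk : k ∈ kerComp ψ e)
    (s : S) (t₁ t₂ : T) (h₁ : ψ t₁ = s) (h₂ : ψ t₂ = s) :
    t₁⁻¹ * e * t₁ = t₂⁻¹ * e * t₂ ∧
    (t₁⁻¹ * k * t₁) * (t₂⁻¹ * k⁻¹ * t₂) ∈ commClosure ψ (t₁⁻¹ * e * t₁) := by
  let φ : T →ₙ* S := ⟨ψ, hmul⟩
  have hφ : IdempotentSeparating φ := hsep
  have ht : φ t₁ = φ t₂ := h₁.trans h₂.symm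
  obtain ⟨hk, rfl⟩ := hk
  set m := t₁ * t₂⁻¹
  have hm : IsIdempotentElem (φ m) := isIdempotentElem_map_mul_inv_of_map_eq ht
  have hmm : m * m⁻¹ = t₁ * t₁⁻¹ := mul_inv_mul_mul_inv_inv_of_map_eq hφ ht
  have ht₂ : m⁻¹ * t₁ = t₂ := mul_inv_inv_mul_of_map_eq hφ ht
  have he := isIdempotentElem_mul_inv k
  have hem : IsIdempotentElem (φ (k * k⁻¹ * m)) := by
    rw [map_mul]
    exact (he.map φ).mul_of_commute (commute_of_isIdempotentElem (he.map φ) hm) hm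
  have hg {x : T} (hx : IsIdempotentElem (φ x)) : Commute x (t₁ * t₁⁻¹) :=
    commute_of_isIdempotentElem_map hφ hx (isIdempotentElem_mul_inv t₁)
  have hb : t₁⁻¹ * (k * k⁻¹ * m) * t₁ ∈ kerComp φ (t₁⁻¹ * (k * k⁻¹) * t₁) := by
    simpa only [mul_mul_inv_of_isIdempotentElem he, hmm, conj_mul_inv_mul]
      using conj_mem_kerComp hφ hem t₁
  refine ⟨conj_eq_of_map_eq hφ ht he,
    Subsemigroup.subset_closure ⟨_, conj_mem_kerComp hφ hk t₁, _, hb, ?_⟩⟩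
  calc t₁⁻¹ * k * t₁ * (t₂⁻¹ * k⁻¹ * t₂)
        = t₁⁻¹ * k * t₁ * (t₁⁻¹ * (m * k⁻¹ * m⁻¹) * t₁) := by
        rw [← ht₂, InverseSemigroup.mul_inv_rev, InverseSemigroup.inv_inv]
        simp only [mul_assoc]
    _ = t₁⁻¹ * (k * (k * k⁻¹ * m) * k⁻¹ * (k * k⁻¹ * m)⁻¹) * t₁ := by
        rw [conj_mul_conj (hg hk), commutator_mul_inv_self_mul
          (commute_of_isIdempotentElem_map hφ hk he) (commute_of_isIdempotentElem_map hφ hm he)]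
        simp only [mul_assoc]
    _ = _ := (conj_commutator (hg hk) (hg hem)).symm

/-- for a surjective idempotent separating `ψ : T → S`, `k ∈ K_e` and two
lifts `t₁, t₂` of `s ∈ S`, we have `t₁⁻¹et₁ = t₂⁻¹et₂` and the images of `t₁⁻¹kt₁` and
`t₂⁻¹kt₂` in the abelianization `K_{t₁⁻¹et₁}^{ab}` coincide (expressed as:
`(t₁⁻¹kt₁)(t₂⁻¹kt₂)⁻¹` is a product of commutators of elements of `K_{t₁⁻¹et₁}`). -/
theorem stmt4 {T S : Type*} [InverseSemigroup T] [InverseSemigroup S] (ψ : T → S)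
    (hmul : ∀ a b : T, ψ (a * b) = ψ a * ψ b)
    (hsurj : Function.Surjective ψ)
    (hsep : ∀ e f : T, e * e = e → f * f = f → ψ e = ψ f → e = f)
    (e : T) (he : e * e = e) (k : T) (hk : k ∈ kerComp ψ e)
    (s : S) (t₁ t₂ : T) (h₁ : ψ t₁ = s) (h₂ : ψ t₂ = s) :
    t₁⁻¹ * e * t₁ = t₂⁻¹ * e * t₂ ∧
    (t₁⁻¹ * k * t₁) * (t₂⁻¹ * k⁻¹ * t₂) ∈ commClosure ψ (t₁⁻¹ * e * t₁) :=
  stmt4_general ψ hmul hsep e k hk s t₁ t₂ h₁ h₂
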